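/- arXiv:2512.13468 — 5 statements merged into one kernel-verified Lean document; each statement's English description precedes it below -/
import Mathlib

section
/- If G is a finite connected simple graph with exactly r ≥ 2 peripheral vertices, then PWW(G) ≥ C(r,2), with equality if and only if G is the complete graph K_r. -/
open Finset SimpleGraph

noncomputable section

/-- Eccentricity of a vertex: maximum distance to any vertex. -/
def ecc {V : Type*} [Fintype V] (G : SimpleGraph V) (u : V) : ℕ :=
  Finset.univ.sup (G.dist u)

/-- Diameter: maximum eccentricity. -/
def gdiam {V : Type*} [Fintype V] (G : SimpleGraph V) : ℕ :=
  Finset.univ.sup (ecc G)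

/-- The set of peripheral vertices: vertices of maximum eccentricity. -/
def peri {V : Type*} [Fintype V] [DecidableEq V] (G : SimpleGraph V) : Finset V :=
  Finset.univ.filter (fun u => ecc G u = gdiam G)

/-- Wiener index: sum of distances over unordered pairs of distinct vertices. -/
def wiener {V : Type*} [Fintype V] [DecidableEq V] (G : SimpleGraph V) : ℚ :=
  (1/2) * ∑ p ∈ (Finset.univ : Finset V).offDiag, (G.dist p.1 p.2 : ℚ)

/-- Hyper-Wiener index. -/
def hyperWiener {V : Type*} [Fintype V] [DecidableEq V] (G : SimpleGraph V) : ℚ :=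
  (1/4) * ∑ p ∈ (Finset.univ : Finset V).offDiag,
    ((G.dist p.1 p.2 : ℚ) + (G.dist p.1 p.2 : ℚ) ^ 2)

/-- Peripheral Wiener index. -/
def periWiener {V : Type*} [Fintype V] [DecidableEq V] (G : SimpleGraph V) : ℚ :=
  (1/2) * ∑ p ∈ (peri G).offDiag, (G.dist p.1 p.2 : ℚ)

/-- Peripheral hyper-Wiener index. -/
def periHyperWiener {V : Type*} [Fintype V] [DecidableEq V] (G : SimpleGraph V) : ℚ :=
  (1/4) * ∑ p ∈ (peri G).offDiag,
    ((G.dist p.1 p.2 : ℚ) + (G.dist p.1 p.2 : ℚ) ^ 2)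

end
theorem pww_lower_bound_peri_card {V : Type*} [Fintype V] [DecidableEq V]
    (G : SimpleGraph V) (hG : G.Connected) (r : ℕ) (hr : 2 ≤ r)
    (hcard : (peri G).card = r) :
    (Nat.choose r 2 : ℚ) ≤ periHyperWiener G ∧
      (periHyperWiener G = (Nat.choose r 2 : ℚ) ↔ G = ⊤) := by
  classical
  set s := (peri G).offDiag with hs
  have hterm : ∀ p ∈ s, (2:ℚ) ≤ (G.dist p.1 p.2 : ℚ) + (G.dist p.1 p.2 : ℚ)^2 := by
    intro p hp
    have h1 : 1 ≤ G.dist p.1 p.2 := hG.pos_dist_of_ne (Finset.mem_offDiag.mp hp).2.2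
    have h1' : (1:ℚ) ≤ (G.dist p.1 p.2 : ℚ) := by exact_mod_cast h1
    nlinarith
  have hrr : r ≤ r * r := Nat.le_mul_of_pos_left r (by omega)
  have hcards : (s.card : ℚ) = r*r - r := by
    rw [hs, Finset.offDiag_card, hcard, Nat.cast_sub hrr, Nat.cast_mul]
  have hchoose : (Nat.choose r 2 : ℚ) = (r*r - r) / 2 := by
    rw [Nat.cast_choose_two]; ring
  have hlow : (Nat.choose r 2 : ℚ) ≤ periHyperWiener G := by
    have hb := Finset.card_nsmul_le_sum s _ (2:ℚ) hterm
    rw [nsmul_eq_mul] at hb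
    rw [periHyperWiener, hchoose]
    rw [hcards] at hb
    linarith
  refine ⟨hlow, ?_, ?_⟩
  · intro heq
    have hsum : ∑ p ∈ s, (2:ℚ) = ∑ p ∈ s, ((G.dist p.1 p.2 : ℚ) + (G.dist p.1 p.2 : ℚ)^2) := by
      rw [Finset.sum_const, nsmul_eq_mul, hcards]
      rw [periHyperWiener, hchoose] at heq
      linarith
    have hall := (Finset.sum_eq_sum_iff_of_le hterm).mp hsum
    have hdist1 : ∀ u v, u ∈ peri G → v ∈ peri G → u ≠ v → G.dist u v = 1 := by
      intro u v hu hv huv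
      have hp : (u, v) ∈ s := Finset.mem_offDiag.mpr ⟨hu, hv, huv⟩
      have h2 := (hall (u, v) hp).symm
      have h1 : 1 ≤ G.dist u v := hG.pos_dist_of_ne huv
      have h1' : (1:ℚ) ≤ (G.dist u v : ℚ) := by exact_mod_cast h1
      have hz : ((G.dist u v : ℚ) - 1) * ((G.dist u v : ℚ) + 2) = 0 := by
        simp only at h2; linear_combination h2
      rcases mul_eq_zero.mp hz with h | h
      · have : (G.dist u v : ℚ) = 1 := by linarith
        exact_mod_cast this
      · linarith
    -- peri G is nonempty
    obtain ⟨u, hu⟩ : (peri G).Nonempty := by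
      rw [← Finset.card_pos, hcard]; omega
    have hV : (Finset.univ : Finset V).Nonempty := ⟨u, Finset.mem_univ u⟩
    have huecc : ecc G u = gdiam G := (Finset.mem_filter.mp hu).2
    -- gdiam ≥ 1
    obtain ⟨w, hw, hwne⟩ : ∃ w ∈ peri G, w ≠ u := by
      have : 1 < (peri G).card := by omega
      obtain ⟨a, ha, b, hb, hab⟩ := Finset.one_lt_card.mp this
      by_cases hau : a = u
      · exact ⟨b, hb, fun h => hab (h ▸ hau.symm ▸ rfl)⟩
      · exact ⟨a, ha, hau⟩
    have hg1 : 1 ≤ gdiam G := by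
      calc 1 ≤ G.dist u w := hG.pos_dist_of_ne (fun h => hwne (h.symm)) 
      _ ≤ ecc G u := Finset.le_sup (Finset.mem_univ w)
      _ = gdiam G := huecc
    -- gdiam = 1
    obtain ⟨v, _, hv⟩ := Finset.exists_mem_eq_sup Finset.univ hV (G.dist u)
    have hduv : G.dist u v = gdiam G := by rw [← huecc, ecc, hv]
    have hg : gdiam G = 1 := by
      by_contra hne
      have h2 : 2 ≤ gdiam G := by omega
      have huv : u ≠ v := by
        intro h; rw [h, SimpleGraph.dist_self] at hduv; omega
      have hvperi : v ∈ peri G := by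
        refine Finset.mem_filter.mpr ⟨Finset.mem_univ v, le_antisymm ?_ ?_⟩
        · exact Finset.le_sup (Finset.mem_univ v)
        · calc gdiam G = G.dist v u := by rw [SimpleGraph.dist_comm, hduv]
          _ ≤ ecc G v := Finset.le_sup (Finset.mem_univ u)
      have := hdist1 u v hu hvperi huv
      omega
    -- conclude G = ⊤
    ext a b
    simp only [SimpleGraph.top_adj]
    constructor
    · exact fun h => h.ne
    · intro hab
      have h1 : 1 ≤ G.dist a b := hG.pos_dist_of_ne hab
      have h2 : G.dist a b ≤ 1 := by
        calc G.dist a b ≤ ecc G a := Finset.le_sup (Finset.mem_univ b)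
        _ ≤ gdiam G := Finset.le_sup (Finset.mem_univ a)
        _ = 1 := hg
      exact SimpleGraph.dist_eq_one_iff_adj.mp (le_antisymm h2 h1)
  · intro hT
    subst hT
    have hsum : ∑ p ∈ s, (((⊤ : SimpleGraph V).dist p.1 p.2 : ℚ) + ((⊤ : SimpleGraph V).dist p.1 p.2 : ℚ)^2) = ∑ p ∈ s, (2:ℚ) := by
      refine Finset.sum_congr rfl ?_
      intro p hp
      have hne := (Finset.mem_offDiag.mp hp).2.2
      have : (⊤ : SimpleGraph V).dist p.1 p.2 = 1 :=
        SimpleGraph.dist_eq_one_iff_adj.mpr ((SimpleGraph.top_adj _ _).mpr hne)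
      rw [this]; norm_num
    rw [periHyperWiener, hsum, Finset.sum_const, nsmul_eq_mul, hcards, hchoose]
    ring
end

section
/- A finite connected simple graph G (with at least 2 vertices) is complete if and only if W(G) = PW(G) = WW(G) = PWW(G). -/
open Finset SimpleGraph

/-!
A graph is complete iff all its distances are at most `1`. For `G = ⊤` every vertex has the same
eccentricity, so every vertex is peripheral and the peripheral indices coincide with the ordinary
ones, while `WW = W` because `d + d² = 2d` for `d ∈ {0, 1}`. Conversely
`4 (WW - W) = ∑ d (d - 1)` is a sum of nonnegative terms, so `WW = W` forces every distance to be
at most `1`, and in a connected graph distinct vertices at distance `≤ 1` are adjacent.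
-/

lemma SimpleGraph.dist_top_le_one {V : Type*} (u v : V) : (⊤ : SimpleGraph V).dist u v ≤ 1 := by
  rcases eq_or_ne u v with rfl | huv
  · simp
  · exact (dist_top_of_ne huv).le

section

variable {V : Type*} [Fintype V]

lemma ecc_top_eq (u v : V) : ecc (⊤ : SimpleGraph V) u = ecc ⊤ v := by
  rcases eq_or_ne u v with rfl | huv
  · rfl
  have ecc_eq_one {x y : V} (hxy : x ≠ y) : ecc (⊤ : SimpleGraph V) x = 1 := by
    refine le_antisymm (Finset.sup_le fun w _ => dist_top_le_one x w) ?_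
    exact (dist_top_of_ne hxy).symm.le.trans (Finset.le_sup (Finset.mem_univ y))
  rw [ecc_eq_one huv, ecc_eq_one huv.symm]

lemma peri_eq_univ_of_ecc_eq [DecidableEq V] {G : SimpleGraph V}
    (h : ∀ u v, ecc G u = ecc G v) : peri G = univ := by
  refine Finset.filter_true_of_mem fun u _ => le_antisymm ?_ ?_
  · exact Finset.le_sup (f := ecc G) (Finset.mem_univ u)
  · exact Finset.sup_le fun v _ => (h v u).le

variable [DecidableEq V]

lemma peri_top : peri (⊤ : SimpleGraph V) = univ :=
  peri_eq_univ_of_ecc_eq ecc_top_eq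

lemma periWiener_top : periWiener (⊤ : SimpleGraph V) = wiener (⊤ : SimpleGraph V) := by
  rw [periWiener, peri_top, wiener]

lemma periHyperWiener_top :
    periHyperWiener (⊤ : SimpleGraph V) = hyperWiener (⊤ : SimpleGraph V) := by
  rw [periHyperWiener, peri_top, hyperWiener]

lemma hyperWiener_sub_wiener (G : SimpleGraph V) :
    hyperWiener G - wiener G =
      (1/4) * ∑ p ∈ (univ : Finset V).offDiag,
        (G.dist p.1 p.2 : ℚ) * ((G.dist p.1 p.2 : ℚ) - 1) := by
  rw [hyperWiener, wiener, mul_sum, mul_sum, mul_sum, ← sum_sub_distrib]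
  exact sum_congr rfl fun _ _ => by ring

lemma hyperWiener_eq_wiener_iff {G : SimpleGraph V} :
    hyperWiener G = wiener G ↔ ∀ u v, G.dist u v ≤ 1 := by
  have term_nonneg (d : ℕ) : 0 ≤ (d : ℚ) * ((d : ℚ) - 1) := by
    rcases d with _ | d
    · simp
    · push_cast
      rw [add_sub_cancel_right]
      positivity
  have term_eq_zero_iff (d : ℕ) : (d : ℚ) * ((d : ℚ) - 1) = 0 ↔ d ≤ 1 := by
    rw [mul_eq_zero, sub_eq_zero]
    norm_cast
    omega
  rw [← sub_eq_zero, hyperWiener_sub_wiener, mul_eq_zero, or_iff_right (by norm_num),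
    sum_eq_zero_iff_of_nonneg fun p _ => term_nonneg _]
  simp only [mem_offDiag, mem_univ, true_and, term_eq_zero_iff, Prod.forall]
  refine ⟨fun h u v => ?_, fun h u v _ => h u v⟩
  rcases eq_or_ne u v with rfl | huv
  · simp
  · exact h u v huv

lemma hyperWiener_top : hyperWiener (⊤ : SimpleGraph V) = wiener (⊤ : SimpleGraph V) :=
  hyperWiener_eq_wiener_iff.2 dist_top_le_one

end

lemma SimpleGraph.Connected.eq_top_of_dist_le_one {V : Type*} {G : SimpleGraph V}
    (hG : G.Connected) (h : ∀ u v, G.dist u v ≤ 1) : G = ⊤ := by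
  ext u v
  refine ⟨Adj.ne, fun huv => dist_eq_one_iff_adj.1 ?_⟩
  exact le_antisymm (h u v) (hG.pos_dist_of_ne huv)

theorem complete_iff_indices_eq_general {V : Type*} [Fintype V] [DecidableEq V]
    (G : SimpleGraph V) (hG : G.Connected) :
    G = ⊤ ↔ (wiener G = periWiener G ∧ wiener G = hyperWiener G ∧
      wiener G = periHyperWiener G) := by
  constructor
  · rintro rfl
    rw [periWiener_top, periHyperWiener_top, hyperWiener_top]
    exact ⟨rfl, rfl, rfl⟩
  · rintro ⟨-, hW, -⟩
    exact hG.eq_top_of_dist_le_one (hyperWiener_eq_wiener_iff.1 hW.symm)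

theorem complete_iff_indices_eq {V : Type*} [Fintype V] [DecidableEq V]
    (G : SimpleGraph V) (hG : G.Connected) (h2 : 2 ≤ Fintype.card V) :
    G = ⊤ ↔ (wiener G = periWiener G ∧ wiener G = hyperWiener G ∧
      wiener G = periHyperWiener G) :=
  complete_iff_indices_eq_general G hG
end

section
/- Let G be a finite connected simple graph of order n, diameter d, with k peripheral vertices. Then WW(G) − (d(d−1)/2)·(C(n,2) − C(k,2)) ≤ PWW(G) ≤ WW(G) − C(n,2) + C(k,2). -/
open Finset SimpleGraph

theorem pww_bounds_via_ww {V : Type*} [Fintype V] [DecidableEq V]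
    (G : SimpleGraph V) (hG : G.Connected)
    (n d k : ℕ) (hn : n = Fintype.card V) (hd : d = gdiam G) (hk : k = (peri G).card) :
    hyperWiener G - ((d : ℚ) * ((d : ℚ) - 1) / 2) *
        ((Nat.choose n 2 : ℚ) - (Nat.choose k 2 : ℚ)) ≤ periHyperWiener G ∧
      periHyperWiener G ≤ hyperWiener G - (Nat.choose n 2 : ℚ) + (Nat.choose k 2 : ℚ) := by
  
  classical
  set P := (peri G).offDiag with hP
  set U := (Finset.univ : Finset V).offDiag with hU
  have hsub : P ⊆ U := by
    intro p hp
    rw [Finset.mem_offDiag] at hp ⊢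
    exact ⟨Finset.mem_univ _, Finset.mem_univ _, hp.2.2⟩
  set S := U \ P with hS
  set f : V × V → ℚ := fun p => (G.dist p.1 p.2 : ℚ) + (G.dist p.1 p.2 : ℚ) ^ 2 with hf
  have hsplit : ∑ p ∈ U, f p = ∑ p ∈ S, f p + ∑ p ∈ P, f p := (Finset.sum_sdiff hsub).symm
  -- distance bounds on S
  have hdlt : ∀ p ∈ S, G.dist p.1 p.2 + 1 ≤ d := by
    intro p hp
    rw [hS, Finset.mem_sdiff] at hp
    obtain ⟨hpU, hpP⟩ := hp
    rw [hU, Finset.mem_offDiag] at hpU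
    have hne := hpU.2.2
    have hnotboth : ¬ (p.1 ∈ peri G ∧ p.2 ∈ peri G) := by
      intro h
      exact hpP (Finset.mem_offDiag.mpr ⟨h.1, h.2, hne⟩)
    have key : ∃ u, (G.dist p.1 p.2 ≤ ecc G u ∧ u ∉ peri G) := by
      by_cases h1 : p.1 ∈ peri G
      · refine ⟨p.2, ?_, fun h2 => hnotboth ⟨h1, h2⟩⟩
        rw [G.dist_comm]
        exact Finset.le_sup (Finset.mem_univ p.1)
      · exact ⟨p.1, Finset.le_sup (Finset.mem_univ p.2), h1⟩
    obtain ⟨u, hle, hu⟩ := key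
    have hecc_le : ecc G u ≤ gdiam G := Finset.le_sup (Finset.mem_univ u)
    have hecc_ne : ecc G u ≠ gdiam G := by
      intro h
      exact hu (Finset.mem_filter.mpr ⟨Finset.mem_univ u, h⟩)
    have : ecc G u < gdiam G := lt_of_le_of_ne hecc_le hecc_ne
    omega
  have hdpos : ∀ p ∈ S, 1 ≤ G.dist p.1 p.2 := by
    intro p hp
    rw [hS, Finset.mem_sdiff] at hp
    have hpU := hp.1
    rw [hU, Finset.mem_offDiag] at hpU
    exact hG.pos_dist_of_ne hpU.2.2
  have hub : ∀ p ∈ S, f p ≤ ((d : ℚ) - 1) + ((d : ℚ) - 1) ^ 2 := by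
    intro p hp
    have h1 := hdlt p hp
    have h2 := hdpos p hp
    have hc1 : (G.dist p.1 p.2 : ℚ) + 1 ≤ (d : ℚ) := by exact_mod_cast h1
    have hc2 : (1 : ℚ) ≤ (G.dist p.1 p.2 : ℚ) := by exact_mod_cast h2
    simp only [hf]
    nlinarith [sq_nonneg ((G.dist p.1 p.2 : ℚ) - ((d : ℚ) - 1))]
  have hlb : ∀ p ∈ S, (2 : ℚ) ≤ f p := by
    intro p hp
    have hc2 : (1 : ℚ) ≤ (G.dist p.1 p.2 : ℚ) := by exact_mod_cast hdpos p hp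
    simp only [hf]
    nlinarith
  have hsum_ub : ∑ p ∈ S, f p ≤ (S.card : ℚ) * (((d : ℚ) - 1) + ((d : ℚ) - 1) ^ 2) := by
    have := Finset.sum_le_card_nsmul S f _ hub
    rwa [nsmul_eq_mul] at this
  have hsum_lb : (S.card : ℚ) * 2 ≤ ∑ p ∈ S, f p := by
    have := Finset.card_nsmul_le_sum S f _ hlb
    rwa [nsmul_eq_mul] at this
  -- cardinalities
  have hUcard : U.card = n * n - n := by
    rw [hU, Finset.offDiag_card, Finset.card_univ, hn]
  have hPcard : P.card = k * k - k := by
    rw [hP, Finset.offDiag_card, hk]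
  have hPU : P.card ≤ U.card := Finset.card_le_card hsub
  have hScard : (S.card : ℚ) = ((U.card : ℚ) - (P.card : ℚ)) := by
    rw [hS, Finset.card_sdiff_of_subset hsub]
    exact Nat.cast_sub hPU
  have hnn : n ≤ n * n := by nlinarith
  have hkk : k ≤ k * k := by nlinarith
  have hUc : (U.card : ℚ) = (n : ℚ) * n - n := by
    rw [hUcard, Nat.cast_sub hnn]; push_cast; ring
  have hPc : (P.card : ℚ) = (k : ℚ) * k - k := by
    rw [hPcard, Nat.cast_sub hkk]; push_cast; ring
  have hs2 : (Nat.choose n 2 : ℚ) - (Nat.choose k 2 : ℚ) = (S.card : ℚ) / 2 := by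
    rw [Nat.cast_choose_two, Nat.cast_choose_two, hScard, hUc, hPc]; ring
  have hHW : hyperWiener G = (1/4) * ∑ p ∈ U, f p := rfl
  have hPHW : periHyperWiener G = (1/4) * ∑ p ∈ P, f p := rfl
  have h1 : (S.card : ℚ) * (((d : ℚ) - 1) + ((d : ℚ) - 1) ^ 2)
      = ((d : ℚ) * ((d : ℚ) - 1)) * (S.card : ℚ) := by ring
  constructor
  · rw [hHW, hPHW, hsplit, hs2]
    rw [h1] at hsum_ub
    nlinarith [hsum_ub]
  · rw [hHW, hPHW, hsplit]
    nlinarith [hsum_lb, hs2]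
end

section
/- Let G be a finite connected simple graph of order n, size m, diameter d, with k peripheral vertices. Then d·⌈k/2⌉ − (d−3)·(C(n,2) − C(k,2)) − m ≤ PW(G) ≤ (d−1)·C(n,2) + (d+1)·C(k,2) − (d−2)·m − (d−1)·⌈k/2⌉. -/
open Finset SimpleGraph

/-!
Write `PW = S / 2`, where `S` sums `d(u, v)` over ordered pairs of distinct peripheral vertices.
Every peripheral vertex lies at distance `d` from another peripheral vertex, so the diametral
graph (`u ~ v` iff `d(u, v) = d`) has at least `⌈k / 2⌉` edges, each contributing `2d` to `S`:
hence `d ⌈k / 2⌉ ≤ PW ≤ d C(k, 2)`. The remaining terms of both bounds have the right sign: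
for `d ≥ 3` because `m ≤ C(n, 2)` and `d < n`; for `d = 2` because a non-peripheral vertex is
adjacent to every other vertex, so `C(n, 2) - C(k, 2) ≤ m`; for `d ≤ 1` because every vertex is
peripheral.
-/

lemma card_offDiag_eq_two_mul_choose {α : Type*} [DecidableEq α] (s : Finset α) :
    #s.offDiag = 2 * (#s).choose 2 := by
  rw [← Sym2.card_image_offDiag, Sym2.two_mul_card_image_offDiag]

lemma ceil_natCast_div_two (k : ℕ) : ⌈(k : ℚ) / 2⌉ = ((k + 1) / 2 : ℕ) := by
  have := Rat.ceil_natCast_div_natCast k 2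
  push_cast at this ⊢
  omega

lemma half_succ_le_choose_two {k : ℕ} (hk : 2 ≤ k) : (k + 1) / 2 ≤ k.choose 2 := by
  obtain ⟨j, rfl⟩ := Nat.exists_eq_add_of_le' hk
  rw [Nat.choose_succ_succ, Nat.choose_one_right]
  omega

section

variable {V : Type*} [Fintype V] (G : SimpleGraph V)

lemma dist_le_ecc (u v : V) : G.dist u v ≤ ecc G u :=
  Finset.le_sup (mem_univ v)

lemma ecc_le_gdiam (u : V) : ecc G u ≤ gdiam G :=
  Finset.le_sup (mem_univ u)

lemma dist_le_gdiam (u v : V) : G.dist u v ≤ gdiam G :=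
  (dist_le_ecc G u v).trans (ecc_le_gdiam G u)

lemma exists_dist_eq_ecc [Nonempty V] (u : V) : ∃ v, G.dist u v = ecc G u := by
  obtain ⟨v, -, hv⟩ := Finset.exists_mem_eq_sup univ univ_nonempty (G.dist u)
  exact ⟨v, hv.symm⟩

lemma exists_ecc_eq_gdiam [Nonempty V] : ∃ u, ecc G u = gdiam G := by
  obtain ⟨u, -, hu⟩ := Finset.exists_mem_eq_sup univ univ_nonempty (ecc G)
  exact ⟨u, hu.symm⟩

lemma exists_dist_eq_gdiam [Nonempty V] : ∃ u v, G.dist u v = gdiam G := by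
  obtain ⟨u, hu⟩ := exists_ecc_eq_gdiam G
  obtain ⟨v, hv⟩ := exists_dist_eq_ecc G u
  exact ⟨u, v, hv.trans hu⟩

lemma gdiam_lt_card (hG : G.Connected) : gdiam G < Fintype.card V := by
  have := hG.nonempty
  obtain ⟨u, v, huv⟩ := exists_dist_eq_gdiam G
  obtain ⟨p, hp, hlen⟩ := hG.exists_path_of_dist u v
  rw [← huv, ← hlen]
  exact hp.length_lt

variable [DecidableEq V]

lemma mem_peri {u : V} : u ∈ peri G ↔ ecc G u = gdiam G := by
  simp [peri]

lemma mem_peri_of_dist_eq_gdiam {u v : V} (h : G.dist u v = gdiam G) : u ∈ peri G :=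
  (mem_peri G).2 <| (ecc_le_gdiam G u).antisymm (h ▸ dist_le_ecc G u v)

lemma exists_dist_eq_gdiam_of_mem_peri {u : V} (hu : u ∈ peri G) :
    ∃ v, G.dist u v = gdiam G := by
  have : Nonempty V := ⟨u⟩
  obtain ⟨v, hv⟩ := exists_dist_eq_ecc G u
  exact ⟨v, hv.trans ((mem_peri G).1 hu)⟩

lemma two_le_card_peri (h : 0 < gdiam G) : 2 ≤ #(peri G) := by
  have : Nonempty V := by
    by_contra hV
    simp [gdiam, not_nonempty_iff.1 hV] at h
  obtain ⟨u, v, huv⟩ := exists_dist_eq_gdiam G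
  have hne : u ≠ v := by rintro rfl; simp [← huv] at h
  exact Finset.one_lt_card.2 ⟨u, mem_peri_of_dist_eq_gdiam G huv, v,
    mem_peri_of_dist_eq_gdiam G (G.dist_comm.trans huv), hne⟩

lemma peri_eq_univ_of_gdiam_le_one (hG : G.Connected) (h : gdiam G ≤ 1) : peri G = univ := by
  have := hG.nonempty
  refine eq_univ_of_forall fun w ↦ (mem_peri G).2 <| (ecc_le_gdiam G w).antisymm ?_
  obtain ⟨u, v, huv⟩ := exists_dist_eq_gdiam G
  rcases Nat.eq_zero_or_pos (gdiam G) with h0 | hpos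
  · omega
  have hne : u ≠ v := by rintro rfl; simp [← huv] at hpos
  obtain ⟨x, hxw⟩ : ∃ x, w ≠ x := by
    by_cases hwu : w = u
    · exact ⟨v, hwu ▸ hne⟩
    · exact ⟨u, hwu⟩
  have := hG.pos_dist_of_ne hxw
  have := dist_le_ecc G w x
  omega

lemma adj_of_not_mem_peri (hG : G.Connected) (h : gdiam G ≤ 2) {u v : V} (hu : u ∉ peri G)
    (huv : u ≠ v) : G.Adj u v := by
  have hlt : ecc G u < gdiam G := (ecc_le_gdiam G u).lt_of_ne (mt (mem_peri G).2 hu)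
  have := dist_le_ecc G u v
  have := hG.pos_dist_of_ne huv
  exact dist_eq_one_iff_adj.1 (by omega)

lemma choose_card_le_choose_card_peri_add_card_edgeFinset [DecidableRel G.Adj]
    (hG : G.Connected) (h : gdiam G ≤ 2) :
    (Fintype.card V).choose 2 ≤ (#(peri G)).choose 2 + #G.edgeFinset := by
  have hsub :
      (univ : Finset V).offDiag ⊆ (peri G).offDiag ∪ univ.filter fun (x, y) ↦ G.Adj x y := by
    rintro ⟨u, v⟩ huv
    simp only [mem_offDiag, mem_univ, true_and] at huv
    by_cases hu : u ∈ peri G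
    · by_cases hv : v ∈ peri G
      · exact mem_union_left _ (mem_offDiag.2 ⟨hu, hv, huv⟩)
      · exact mem_union_right _ (by simpa using (adj_of_not_mem_peri G hG h hv huv.symm).symm)
    · exact mem_union_right _ (by simpa using adj_of_not_mem_peri G hG h hu huv)
  have := (card_le_card hsub).trans (card_union_le _ _)
  rw [card_offDiag_eq_two_mul_choose, card_offDiag_eq_two_mul_choose,
    ← two_mul_card_edgeFinset, card_univ] at this
  omega

noncomputable def diametralGraph (G : SimpleGraph V) : SimpleGraph V where
  Adj u v := u ≠ v ∧ G.dist u v = gdiam G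
  symm := ⟨fun _ _ h ↦ ⟨h.1.symm, G.dist_comm.trans h.2⟩⟩
  loopless := ⟨fun _ h ↦ h.1 rfl⟩

noncomputable instance : DecidableRel (diametralGraph G).Adj :=
  fun u v ↦ inferInstanceAs (Decidable (u ≠ v ∧ G.dist u v = gdiam G))

lemma card_peri_le_two_mul_card_edgeFinset_diametralGraph (h : 0 < gdiam G) :
    #(peri G) ≤ 2 * #(diametralGraph G).edgeFinset := by
  rw [← dart_card_eq_twice_card_edges, ← card_univ]
  refine (card_le_card fun u hu ↦ ?_).trans
    (card_image_le (s := univ) (f := fun e : (diametralGraph G).Dart ↦ e.fst))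
  obtain ⟨v, huv⟩ := exists_dist_eq_gdiam_of_mem_peri G hu
  have hne : u ≠ v := by rintro rfl; simp [← huv] at h
  exact mem_image.2 ⟨⟨(u, v), hne, huv⟩, mem_univ _, rfl⟩

lemma gdiam_mul_card_darts_diametralGraph_le :
    gdiam G * (2 * #(diametralGraph G).edgeFinset) ≤
      ∑ p ∈ (peri G).offDiag, G.dist p.1 p.2 := by
  rw [two_mul_card_edgeFinset, mul_comm, ← smul_eq_mul, ← sum_const]
  calc ∑ _p ∈ univ.filter fun (x, y) ↦ (diametralGraph G).Adj x y, gdiam G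
      = ∑ p ∈ univ.filter fun (x, y) ↦ (diametralGraph G).Adj x y, G.dist p.1 p.2 :=
        sum_congr rfl fun p hp ↦ ((mem_filter.1 hp).2.2).symm
    _ ≤ _ := sum_le_sum_of_subset fun p hp ↦ by
        obtain ⟨-, hne, hp⟩ := mem_filter.1 hp
        exact mem_offDiag.2 ⟨mem_peri_of_dist_eq_gdiam G hp,
          mem_peri_of_dist_eq_gdiam G (G.dist_comm.trans hp), hne⟩

lemma periWiener_eq_sum_div_two :
    periWiener G = (∑ p ∈ (peri G).offDiag, G.dist p.1 p.2 : ℕ) / 2 := by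
  rw [periWiener]
  push_cast
  ring

lemma gdiam_mul_ceil_le_periWiener :
    (gdiam G : ℚ) * ⌈(#(peri G) : ℚ) / 2⌉ ≤ periWiener G := by
  rw [ceil_natCast_div_two, periWiener_eq_sum_div_two, le_div_iff₀ two_pos]
  have hS := gdiam_mul_card_darts_diametralGraph_le G
  suffices
      gdiam G * ((#(peri G) + 1) / 2 * 2) ≤ gdiam G * (2 * #(diametralGraph G).edgeFinset) by
    push_cast
    exact_mod_cast mul_assoc (gdiam G) _ 2 ▸ this.trans hS
  rcases Nat.eq_zero_or_pos (gdiam G) with h0 | hpos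
  · simp [h0]
  have := card_peri_le_two_mul_card_edgeFinset_diametralGraph G hpos
  exact Nat.mul_le_mul_left _ (by omega)

lemma periWiener_le_gdiam_mul_choose :
    periWiener G ≤ gdiam G * (#(peri G)).choose 2 := by
  rw [periWiener_eq_sum_div_two, div_le_iff₀ two_pos]
  have := sum_le_card_nsmul (peri G).offDiag (fun p ↦ G.dist p.1 p.2) (gdiam G)
    fun p _ ↦ dist_le_gdiam G p.1 p.2
  rw [card_offDiag_eq_two_mul_choose, smul_eq_mul] at this
  exact_mod_cast this.trans_eq (by ring)

lemma gdiam_sub_two_mul_half_card_peri_le (hG : G.Connected) :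
    ((gdiam G : ℚ) - 2) * ((#(peri G) + 1) / 2 : ℕ) ≤ (Fintype.card V).choose 2 := by
  have hN : (0 : ℚ) ≤ (Fintype.card V).choose 2 := Nat.cast_nonneg _
  have hc : (0 : ℚ) ≤ ((#(peri G) + 1) / 2 : ℕ) := Nat.cast_nonneg _
  rcases lt_or_ge (gdiam G) 2 with h1 | h2
  · have hd : (gdiam G : ℚ) ≤ 2 := by exact_mod_cast h1.le
    nlinarith
  have hd : (2 : ℚ) ≤ gdiam G := by exact_mod_cast h2
  have hdn : (gdiam G : ℚ) + 1 ≤ Fintype.card V := by exact_mod_cast gdiam_lt_card G hG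
  have hkn : (#(peri G) : ℚ) ≤ Fintype.card V := by exact_mod_cast card_le_univ (peri G)
  have hck : (((#(peri G) + 1) / 2 : ℕ) : ℚ) * 2 ≤ #(peri G) + 1 := by
    exact_mod_cast Nat.div_mul_le_self _ 2
  -- `(d - 2) ⌈k / 2⌉ ≤ (n - 3) (n + 1) / 2 ≤ n (n - 1) / 2`
  rw [Nat.cast_choose_two]
  nlinarith

variable [DecidableRel G.Adj]

theorem le_periWiener (hG : G.Connected) :
    (gdiam G : ℚ) * (⌈(#(peri G) : ℚ) / 2⌉ : ℚ) -
        ((gdiam G : ℚ) - 3) * ((Fintype.card V).choose 2 - (#(peri G)).choose 2) -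
        #G.edgeFinset ≤ periWiener G := by
  suffices ((3 : ℚ) - gdiam G) * ((Fintype.card V).choose 2 - (#(peri G)).choose 2) ≤
      #G.edgeFinset by
    linarith [gdiam_mul_ceil_le_periWiener G]
  rcases lt_or_ge (gdiam G) 2 with h1 | h2
  · rw [peri_eq_univ_of_gdiam_le_one G hG (by omega), card_univ]
    simp
  rcases h2.eq_or_lt with h2 | h3
  · have := choose_card_le_choose_card_peri_add_card_edgeFinset G hG h2.ge
    rw [← h2, Nat.cast_ofNat]
    have : ((Fintype.card V).choose 2 : ℚ) ≤ (#(peri G)).choose 2 + #G.edgeFinset := by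
      exact_mod_cast this
    linarith
  · have hd : (3 : ℚ) ≤ gdiam G := by exact_mod_cast h3
    have hk : ((#(peri G)).choose 2 : ℚ) ≤ (Fintype.card V).choose 2 := by
      exact_mod_cast Nat.choose_le_choose 2 (card_le_univ _)
    nlinarith

theorem periWiener_le (hG : G.Connected) :
    periWiener G ≤ ((gdiam G : ℚ) - 1) * (Fintype.card V).choose 2 +
      ((gdiam G : ℚ) + 1) * (#(peri G)).choose 2 - ((gdiam G : ℚ) - 2) * #G.edgeFinset -
      ((gdiam G : ℚ) - 1) * (⌈(#(peri G) : ℚ) / 2⌉ : ℚ) := by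
  rw [ceil_natCast_div_two, Int.cast_natCast]
  suffices ((gdiam G : ℚ) - 1) * ((#(peri G) + 1) / 2 : ℕ) +
      ((gdiam G : ℚ) - 2) * #G.edgeFinset ≤
      ((gdiam G : ℚ) - 1) * (Fintype.card V).choose 2 + (#(peri G)).choose 2 by
    linarith [periWiener_le_gdiam_mul_choose G]
  have hc : (0 : ℚ) ≤ ((#(peri G) + 1) / 2 : ℕ) := Nat.cast_nonneg _
  have hm : (0 : ℚ) ≤ #G.edgeFinset := Nat.cast_nonneg _
  rcases lt_or_ge (gdiam G) 2 with h1 | h2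
  · rw [peri_eq_univ_of_gdiam_le_one G hG (by omega), card_univ]
    have hd : (gdiam G : ℚ) ≤ 1 := by exact_mod_cast Nat.le_of_lt_succ h1
    have hN : (0 : ℚ) ≤ (Fintype.card V).choose 2 := Nat.cast_nonneg _
    nlinarith
  · have hd : (2 : ℚ) ≤ gdiam G := by exact_mod_cast h2
    have hcA : (((#(peri G) + 1) / 2 : ℕ) : ℚ) ≤ (#(peri G)).choose 2 := by
      exact_mod_cast half_succ_le_choose_two (two_le_card_peri G (by omega))
    have hmN : (#G.edgeFinset : ℚ) ≤ (Fintype.card V).choose 2 := by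
      exact_mod_cast G.card_edgeFinset_le_card_choose_two
    nlinarith [gdiam_sub_two_mul_half_card_peri_le G hG]

end

theorem pw_bounds {V : Type*} [Fintype V] [DecidableEq V]
    (G : SimpleGraph V) (hG : G.Connected)
    (n m d k : ℕ) (hn : n = Fintype.card V) (hm : m = G.edgeSet.ncard)
    (hd : d = gdiam G) (hk : k = (peri G).card) :
    (d : ℚ) * (⌈(k : ℚ) / 2⌉ : ℚ) -
        ((d : ℚ) - 3) * ((Nat.choose n 2 : ℚ) - (Nat.choose k 2 : ℚ)) - (m : ℚ)
      ≤ periWiener G ∧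
    periWiener G ≤ ((d : ℚ) - 1) * (Nat.choose n 2 : ℚ) + ((d : ℚ) + 1) * (Nat.choose k 2 : ℚ)
      - ((d : ℚ) - 2) * (m : ℚ) - ((d : ℚ) - 1) * (⌈(k : ℚ) / 2⌉ : ℚ) := by
  classical
  subst hn hm hd hk
  rw [Set.ncard_eq_toFinset_card' G.edgeSet, ← edgeFinset]
  exact ⟨le_periWiener G hG, periWiener_le G hG⟩
end

section
/- Let T be a tree of diameter 4 with unique central vertex u, viewed as rooted at u. Let c₁,…,c_s be the children of u and, for each i, let C_i be the set of children of c_i. Then PWW(T) = 10·Σ_{1≤i<j≤s} |C_i||C_j| + 3·Σ_{i=1}^{s} C(|C_i|,2). -/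
open Finset SimpleGraph

private lemma aux_no_tri {V : Type*} {T : SimpleGraph V} (hT : T.IsAcyclic)
    {a b c : V} (hab : T.Adj a b) (hbc : T.Adj b c) (hac : T.Adj a c) : False := by
  have h1 : (Walk.cons hac Walk.nil : T.Walk a c).IsPath := by
    simp [Walk.isPath_def, hac.ne]
  have h2 : (Walk.cons hab (Walk.cons hbc Walk.nil) : T.Walk a c).IsPath := by
    simp [Walk.isPath_def, hab.ne, hbc.ne, hac.ne]
  have heq := hT.path_unique ⟨_, h1⟩ ⟨_, h2⟩
  have hl := congrArg (fun p : T.Path a c => p.1.length) heq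
  simp at hl

private lemma aux_par {V : Type*} {T : SimpleGraph V} (hT : T.IsAcyclic)
    {u c c' v : V} (huc : T.Adj u c) (hcv : T.Adj c v) (huc' : T.Adj u c')
    (hc'v : T.Adj c' v) (huv : u ≠ v) : c = c' := by
  have h1 : (Walk.cons huc (Walk.cons hcv Walk.nil) : T.Walk u v).IsPath := by
    simp [Walk.isPath_def, huc.ne, hcv.ne, huv]
  have h2 : (Walk.cons huc' (Walk.cons hc'v Walk.nil) : T.Walk u v).IsPath := by
    simp [Walk.isPath_def, huc'.ne, hc'v.ne, huv]
  have heq := hT.path_unique ⟨_, h1⟩ ⟨_, h2⟩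
  have hs := congrArg (fun p : T.Path u v => p.1.support) heq
  simp at hs
  exact hs

private lemma aux_mid {V : Type*} {T : SimpleGraph V} (hconn : T.Connected)
    {u v : V} (h : T.dist u v = 2) : ∃ c, T.Adj u c ∧ T.Adj c v := by
  obtain ⟨p, hp⟩ := hconn.exists_walk_length_eq_dist u v
  rw [h] at hp
  cases p with
  | nil => simp at hp
  | cons h1 q =>
    cases q with
    | nil => simp at hp
    | cons h2 r =>
      cases r with
      | nil => exact ⟨_, h1, h2⟩
      | cons h3 s => simp at hp

private lemma aux_g1 {V : Type*} {T : SimpleGraph V} (hT : T.IsTree)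
    {u c v : V} (huc : T.Adj u c) (hcv : T.Adj c v) (hvu : v ≠ u) : T.dist u v = 2 := by
  have hle : T.dist u v ≤ 2 := by
    have := SimpleGraph.dist_le (Walk.cons huc (Walk.cons hcv Walk.nil) : T.Walk u v)
    simpa using this
  have h0 : T.dist u v ≠ 0 := by
    intro h
    rw [hT.isConnected.dist_eq_zero_iff] at h
    exact hvu h.symm
  have h1 : T.dist u v ≠ 1 := by
    intro h
    exact aux_no_tri hT.IsAcyclic huc hcv (dist_eq_one_iff_adj.mp h)
  omega

private lemma aux_d1 {V : Type*} {T : SimpleGraph V} (hT : T.IsTree)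
    {c v w : V} (hcv : T.Adj c v) (hcw : T.Adj c w) (hvw : v ≠ w) : T.dist v w = 2 := by
  have hle : T.dist v w ≤ 2 := by
    have := SimpleGraph.dist_le (Walk.cons hcv.symm (Walk.cons hcw Walk.nil) : T.Walk v w)
    simpa using this
  have h0 : T.dist v w ≠ 0 := by
    intro h
    rw [hT.isConnected.dist_eq_zero_iff] at h
    exact hvw h
  have h1 : T.dist v w ≠ 1 := by
    intro h
    exact aux_no_tri hT.IsAcyclic hcv (dist_eq_one_iff_adj.mp h) hcw
  omega

private lemma aux_d2 {V : Type*} [DecidableEq V] {T : SimpleGraph V} (hT : T.IsTree)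
    {u c c' v w : V} (huc : T.Adj u c) (hcv : T.Adj c v) (huc' : T.Adj u c')
    (hc'w : T.Adj c' w) (hcc' : c ≠ c') (hvu : v ≠ u) (hwu : w ≠ u) :
    T.dist v w = 4 := by
  have hvc' : v ≠ c' := fun h => aux_no_tri hT.IsAcyclic huc hcv (h ▸ huc')
  have hwc : w ≠ c := fun h => aux_no_tri hT.IsAcyclic huc' hc'w (h ▸ huc)
  have hvw : v ≠ w := fun h => hcc' (aux_par hT.IsAcyclic huc hcv huc' (h ▸ hc'w) (Ne.symm hvu))
  set Q : T.Walk v w :=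
    Walk.cons hcv.symm (Walk.cons huc.symm (Walk.cons huc' (Walk.cons hc'w Walk.nil))) with hQ
  have hQP : Q.IsPath := by
    simp [hQ, Walk.isPath_def, hcv.ne, huc.ne, huc'.ne, hc'w.ne, hcc', hvu, hwu, hvc', hwc, hvw,
      Ne.symm hvu, Ne.symm hwu, Ne.symm hcc', hcv.ne', huc.ne', Ne.symm hwc]
  have hle : T.dist v w ≤ 4 := by simpa [hQ] using SimpleGraph.dist_le Q
  by_contra hne
  have hlt : T.dist v w < 4 := lt_of_le_of_ne hle hne
  obtain ⟨p, hp⟩ := hT.isConnected.exists_walk_length_eq_dist v w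
  have heq := hT.IsAcyclic.path_unique p.toPath ⟨Q, hQP⟩
  have hl := congrArg (fun q : T.Path v w => q.1.length) heq
  simp only [Walk.toPath] at hl
  have := Walk.length_bypass_le p
  simp [hQ] at hl
  omega

theorem pww_diam_four_tree {V : Type*} [Fintype V] [DecidableEq V]
    (T : SimpleGraph V) [DecidableRel T.Adj] (hT : T.IsTree) (hdiam : gdiam T = 4)
    (u : V) (hu : ecc T u = 2) :
    periHyperWiener T =
      5 * ∑ p ∈ (T.neighborFinset u).offDiag,
          (((T.neighborFinset p.1).erase u).card : ℚ) *
            (((T.neighborFinset p.2).erase u).card : ℚ) +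
      3 * ∑ c ∈ T.neighborFinset u,
          (Nat.choose ((T.neighborFinset c).erase u).card 2 : ℚ) := by
  have hconn := hT.isConnected
  have hNV : Nonempty V := ⟨u⟩
  set B := T.neighborFinset u with hB
  set A : V → Finset V := fun c => (T.neighborFinset c).erase u with hA
  -- every vertex is within distance 2 of u
  have hc2 : ∀ v, T.dist u v ≤ 2 := by
    intro v
    have h : T.dist u v ≤ ecc T u := by
      unfold ecc; exact Finset.le_sup (Finset.mem_univ v)
    omega
  -- distance-4 endpoints are at distance 2 from u
  have hfar : ∀ x y : V, T.dist x y = 4 → T.dist u x = 2 := by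
    intro x y h
    have h1 : T.dist x y ≤ T.dist x u + T.dist u y := hconn.dist_triangle
    have h2 := hc2 x
    have h3 := hc2 y
    have h4 : T.dist x u = T.dist u x := SimpleGraph.dist_comm
    omega
  have hecc4 : ∀ v, ecc T v ≤ 4 := by
    intro v
    unfold ecc
    refine Finset.sup_le fun x _ => ?_
    have h1 : T.dist v x ≤ T.dist v u + T.dist u x := hconn.dist_triangle
    have h2 := hc2 v
    have h3 := hc2 x
    have h4 : T.dist v u = T.dist u v := SimpleGraph.dist_comm
    omega
  -- a far pair z, x with dist z x = 4
  obtain ⟨z, -, hz⟩ := Finset.exists_mem_eq_sup (Finset.univ : Finset V) Finset.univ_nonempty (ecc T)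
  have hz4 : ecc T z = 4 := by rw [← hz]; exact hdiam
  obtain ⟨x, -, hx⟩ := Finset.exists_mem_eq_sup (Finset.univ : Finset V) Finset.univ_nonempty (T.dist z)
  have hzx : T.dist z x = 4 := by
    have : ecc T z = T.dist z x := hx
    omega
  have huz : T.dist u z = 2 := hfar z x hzx
  have hux : T.dist u x = 2 := hfar x z (by rw [SimpleGraph.dist_comm]; exact hzx)
  obtain ⟨cz, hucz, hczz⟩ := aux_mid hconn huz
  obtain ⟨cx, hucx, hcxx⟩ := aux_mid hconn hux
  have hzu : z ≠ u := by
    intro h; rw [h] at huz; simp [SimpleGraph.dist_self] at huz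
  have hxu : x ≠ u := by
    intro h; rw [h] at hux; simp [SimpleGraph.dist_self] at hux
  have hczcx : cz ≠ cx := by
    intro h
    by_cases hzx' : z = x
    · rw [hzx'] at hzx; simp [SimpleGraph.dist_self] at hzx
    · have := aux_d1 hT hczz (h ▸ hcxx) hzx'
      omega
  -- dist 2 from u implies eccentricity 4
  have hd2e : ∀ v, T.dist u v = 2 → ecc T v = 4 := by
    intro v hv
    obtain ⟨c, huc, hcv⟩ := aux_mid hconn hv
    have hvu : v ≠ u := by
      intro h; rw [h] at hv; simp [SimpleGraph.dist_self] at hv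
    have hge : 4 ≤ ecc T v := by
      by_cases hccz : c = cz
      · have hd := aux_d2 hT huc hcv hucx hcxx (hccz ▸ hczcx) hvu hxu
        have : T.dist v x ≤ ecc T v := Finset.le_sup (Finset.mem_univ x)
        omega
      · have hd := aux_d2 hT huc hcv hucz hczz hccz hvu hzu
        have : T.dist v z ≤ ecc T v := Finset.le_sup (Finset.mem_univ z)
        omega
    have := hecc4 v
    omega
  -- peri is the union of the grandchildren sets
  have hperi : peri T = B.biUnion A := by
    ext v
    simp only [peri, Finset.mem_filter, Finset.mem_univ, true_and, hdiam, Finset.mem_biUnion,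
      hB, hA, SimpleGraph.mem_neighborFinset, Finset.mem_erase]
    constructor
    · intro h4
      obtain ⟨y, -, hy⟩ := Finset.exists_mem_eq_sup (Finset.univ : Finset V)
        Finset.univ_nonempty (T.dist v)
      have hvy : T.dist v y = 4 := by
        have : ecc T v = T.dist v y := hy
        omega
      have hv2 : T.dist u v = 2 := hfar v y hvy
      obtain ⟨c, huc, hcv⟩ := aux_mid hconn hv2
      have hvu : v ≠ u := by
        intro h; rw [h] at hv2; simp [SimpleGraph.dist_self] at hv2
      exact ⟨c, huc, hvu, hcv⟩
    · rintro ⟨c, huc, hvu, hcv⟩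
      exact hd2e v (aux_g1 hT huc hcv hvu)
  -- pairwise disjointness
  have hdisj : (↑B : Set V).PairwiseDisjoint A := by
    intro c hc c' hc' hne
    simp only [Function.onFun, Finset.disjoint_left]
    intro v hv hv'
    simp only [hA, Finset.mem_erase, SimpleGraph.mem_neighborFinset] at hv hv'
    simp only [hB, Finset.coe_sort_coe, SimpleGraph.mem_neighborFinset, Finset.mem_coe,
      SimpleGraph.mem_neighborFinset] at hc hc'
    exact hne (aux_par hT.IsAcyclic hc hv.2 hc' hv'.2 (Ne.symm hv.1))
  -- distance values between grandchildren
  have hdsame : ∀ c ∈ B, ∀ v ∈ A c, ∀ w ∈ A c, v ≠ w → T.dist v w = 2 := by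
    intro c hc v hv w hw hvw
    simp only [hA, Finset.mem_erase, SimpleGraph.mem_neighborFinset] at hv hw
    exact aux_d1 hT hv.2 hw.2 hvw
  have hdcross : ∀ c ∈ B, ∀ c' ∈ B, c ≠ c' → ∀ v ∈ A c, ∀ w ∈ A c', T.dist v w = 4 := by
    intro c hc c' hc' hne v hv w hw
    simp only [hA, Finset.mem_erase, SimpleGraph.mem_neighborFinset] at hv hw
    simp only [hB, SimpleGraph.mem_neighborFinset] at hc hc'
    exact aux_d2 hT hc hv.2 hc' hw.2 hne hv.1 hw.1
  have hsum : ∑ p ∈ (peri T).offDiag, ((T.dist p.1 p.2 : ℚ) + (T.dist p.1 p.2 : ℚ) ^ 2)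
      = ∑ p ∈ B.offDiag, (20 * ((A p.1).card : ℚ) * ((A p.2).card : ℚ))
        + ∑ c ∈ B, (((A c).card : ℚ) * (6 * ((A c).card : ℚ) - 6)) := by
    have h1 : ∑ p ∈ (peri T).offDiag, ((T.dist p.1 p.2 : ℚ) + (T.dist p.1 p.2 : ℚ) ^ 2)
        = ∑ p ∈ (peri T) ×ˢ (peri T), ((T.dist p.1 p.2 : ℚ) + (T.dist p.1 p.2 : ℚ) ^ 2) := by
      apply Finset.sum_subset
      · intro p hp
        rw [Finset.mem_offDiag] at hp
        rw [Finset.mem_product]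
        exact ⟨hp.1, hp.2.1⟩
      · intro p hp hnp
        rw [Finset.mem_product] at hp
        rw [Finset.mem_offDiag] at hnp
        push_neg at hnp
        have : p.1 = p.2 := hnp hp.1 hp.2
        simp [this, SimpleGraph.dist_self]
    rw [h1, Finset.sum_product, hperi]
    rw [Finset.sum_biUnion hdisj]
    have h2 : ∀ c ∈ B, ∑ v ∈ A c, ∑ w ∈ B.biUnion A, ((T.dist v w : ℚ) + (T.dist v w : ℚ) ^ 2)
        = ∑ c' ∈ B, ∑ v ∈ A c, ∑ w ∈ A c', ((T.dist v w : ℚ) + (T.dist v w : ℚ) ^ 2) := by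
      intro c hc
      rw [Finset.sum_comm, Finset.sum_biUnion hdisj]
      exact Finset.sum_congr rfl fun c' _ => Finset.sum_comm
    rw [Finset.sum_congr rfl h2]
    rw [← Finset.sum_product']
    rw [← Finset.diag_union_offDiag, Finset.sum_union (Finset.disjoint_diag_offDiag B),
      Finset.sum_diag, add_comm]
    congr 1
    · refine Finset.sum_congr rfl fun p hp => ?_
      rw [Finset.mem_offDiag] at hp
      have hval : ∀ v ∈ A p.1, ∀ w ∈ A p.2,
          ((T.dist v w : ℚ) + (T.dist v w : ℚ) ^ 2) = 20 := by
        intro v hv w hw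
        rw [hdcross p.1 hp.1 p.2 hp.2.1 hp.2.2 v hv w hw]
        norm_num
      rw [Finset.sum_congr rfl fun v hv => Finset.sum_congr rfl (hval v hv)]
      simp [Finset.sum_const]
      ring
    · refine Finset.sum_congr rfl fun c hc => ?_
      have hinner : ∀ v ∈ A c, ∑ w ∈ A c, ((T.dist v w : ℚ) + (T.dist v w : ℚ) ^ 2)
          = 6 * ((A c).card : ℚ) - 6 := by
        intro v hv
        have hptw : ∀ w ∈ A c, ((T.dist v w : ℚ) + (T.dist v w : ℚ) ^ 2)
            = 6 - (if v = w then (6 : ℚ) else 0) := by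
          intro w hw
          by_cases h : v = w
          · simp [h, SimpleGraph.dist_self]
          · rw [hdsame c hc v hv w hw h]
            simp [h]
            norm_num
        rw [Finset.sum_congr rfl hptw, Finset.sum_sub_distrib, Finset.sum_const,
          Finset.sum_ite_eq, if_pos hv]
        simp [mul_comm]
      rw [Finset.sum_congr rfl hinner, Finset.sum_const]
      simp [mul_comm]
  unfold periHyperWiener
  rw [hsum, mul_add]
  congr 1
  · rw [Finset.mul_sum, Finset.mul_sum]
    exact Finset.sum_congr rfl fun p _ => by ring
  · rw [Finset.mul_sum, Finset.mul_sum]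
    refine Finset.sum_congr rfl fun c _ => ?_
    rw [Nat.cast_choose_two]
    ring
end
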